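/- arXiv:2502.02075 — 3 statements merged into one kernel-verified Lean document; each statement's English description precedes it below -/
import Mathlib

section
/- For integers n ≥ 2 and d ≥ n, with λ_m(d,k) the coefficients of d·∏_{j=1}^{k-1}(jX+(d-2j)), the degree formula N_{n+1}(n,d) := ∑_{m=n-1}^{n} λ_m(d,n+1)·(binom(m,n-1) − binom(m,n)) equals d²·∑_{i=1}^{n} n!/i − d·(n+1)!. -/
/-!
The coefficients `λ_m(d, n+1)` are `d` times those of `Q = ∏_{j=1}^n (jX + (d - 2j))`, and
only `m = n - 1` and `m = n` occur, with binomial weights `1` and `n - 1`. The top coefficient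
of `Q` is `n!`; the next one is `∑_i (d - 2i) · n!/i = d · ∑_i n!/i - 2n · n!`.
-/

open Polynomial Finset

/-- `P_{d,k}(X) = d·∏_{j=1}^{k-1}(jX + (d-2j))` in `ℤ[X]`; its coefficients are `λ_m(d,k)`. -/
noncomputable def flexPoly (d : ℤ) (k : ℕ) : Polynomial ℤ :=
  Polynomial.C d * ∏ j ∈ Finset.Icc 1 (k - 1), (Polynomial.C (j : ℤ) * Polynomial.X + Polynomial.C (d - 2 * j))

/-- `N_k(n,d) = ∑_{m=n-1}^{k-1} λ_m(d,k)·(binom(m,n-1) − binom(m,n))`. -/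
noncomputable def degFlex (n : ℕ) (d : ℤ) (k : ℕ) : ℤ :=
  ∑ m ∈ Finset.Icc (n - 1) (k - 1),
    (flexPoly d k).coeff m * ((m.choose (n - 1) : ℤ) - m.choose n)

namespace Polynomial

variable {ι R : Type*} [CommSemiring R]

theorem coeff_prod_linear_card (s : Finset ι) (a b : ι → R) :
    (∏ i ∈ s, (C (a i) * X + C (b i))).coeff #s = ∏ i ∈ s, a i := by
  simpa using coeff_prod_of_natDegree_le (s := s) (fun i => C (a i) * X + C (b i)) 1
    fun _ _ => natDegree_linear_le

theorem coeff_prod_linear_card_sub_one [DecidableEq ι] {s : Finset ι} (hs : s.Nonempty)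
    (a b : ι → R) :
    (∏ i ∈ s, (C (a i) * X + C (b i))).coeff (#s - 1) = ∑ i ∈ s, b i * ∏ j ∈ s.erase i, a j := by
  induction hs using Finset.Nonempty.cons_induction with
  | singleton i => simp [coeff_C]
  | cons i s hi hs ih =>
    obtain ⟨k, hk⟩ : ∃ k, #s = k + 1 := ⟨#s - 1, by have := hs.card_pos; omega⟩
    rw [hk, Nat.add_sub_cancel] at ih
    have herase (j) (hj : j ∈ s) : (s.cons i hi).erase j = (s.erase j).cons i (by simp [hi]) :=
      erase_cons_of_ne hi (ne_of_mem_of_not_mem hj hi).symm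
    rw [prod_cons, card_cons, sum_cons, erase_cons, sum_congr rfl fun j hj => by rw [herase j hj],
      add_tsub_cancel_right, hk, add_mul, coeff_add, coeff_C_mul, mul_assoc, coeff_C_mul,
      mul_comm X, coeff_mul_X, ← hk, coeff_prod_linear_card, ih, mul_sum, add_comm]
    simp only [prod_cons]
    exact congrArg (_ + ·) (sum_congr rfl fun j _ => by ring)

end Polynomial

open scoped Nat

theorem Finset.prod_Icc_one_id_eq_factorial (n : ℕ) : ∏ j ∈ Icc 1 n, j = n ! := by
  rw [← Ico_add_one_right_eq_Icc, prod_Ico_id_eq_factorial]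

theorem Finset.prod_Icc_one_natCast {R : Type*} [CommSemiring R] (n : ℕ) :
    ∏ j ∈ Icc 1 n, (j : R) = n ! := by
  rw [← Nat.cast_prod, prod_Icc_one_id_eq_factorial]

theorem Finset.prod_Icc_one_erase_natCast {R : Type*} [CommSemiring R] {n i : ℕ}
    (hi : i ∈ Icc 1 n) : ∏ j ∈ (Icc 1 n).erase i, (j : R) = (n ! / i : ℕ) := by
  have hmul : i * ∏ j ∈ (Icc 1 n).erase i, j = n ! := by
    rw [mul_prod_erase (Icc 1 n) (fun j => j) hi, prod_Icc_one_id_eq_factorial]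
  rw [← Nat.cast_prod, Nat.eq_div_of_mul_eq_right (Nat.pos_iff_ne_zero.1 (mem_Icc.1 hi).1) hmul]

noncomputable def flexFactor (d : ℤ) (n : ℕ) : ℤ[X] :=
  ∏ j ∈ Icc 1 n, (C (j : ℤ) * X + C (d - 2 * j))

theorem flexPoly_succ (d : ℤ) (n : ℕ) : flexPoly d (n + 1) = C d * flexFactor d n := rfl

theorem coeff_flexFactor_self (d : ℤ) (n : ℕ) : (flexFactor d n).coeff n = n ! := by
  have h := coeff_prod_linear_card (Icc 1 n) (fun j => (j : ℤ)) (fun j => d - 2 * j)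
  rwa [Nat.card_Icc, Nat.add_sub_cancel, prod_Icc_one_natCast] at h

theorem coeff_flexFactor_succ_self (d : ℤ) (n : ℕ) :
    (flexFactor d (n + 1)).coeff n =
      d * ∑ i ∈ Icc 1 (n + 1), (((n + 1)! / i : ℕ) : ℤ) - 2 * (n + 1) * (n + 1)! := by
  have h := coeff_prod_linear_card_sub_one (nonempty_Icc.2 (Nat.le_add_left 1 n))
    (fun j => (j : ℤ)) (fun j => d - 2 * j)
  rw [Nat.card_Icc, Nat.add_sub_cancel, Nat.add_sub_cancel, sum_congr rfl fun i hi => by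
    rw [prod_Icc_one_erase_natCast hi]] at h
  have hcancel (i) (hi : i ∈ Icc 1 (n + 1)) : (i : ℤ) * ((n + 1)! / i : ℕ) = (n + 1)! := by
    exact_mod_cast Nat.mul_div_cancel' (Nat.dvd_factorial (mem_Icc.1 hi).1 (mem_Icc.1 hi).2)
  calc (flexFactor d (n + 1)).coeff n
      = ∑ i ∈ Icc 1 (n + 1), (d * ((n + 1)! / i : ℕ) - 2 * (i * ((n + 1)! / i : ℕ))) := by
        rw [flexFactor, h]; exact sum_congr rfl fun i _ => by ring
    _ = d * ∑ i ∈ Icc 1 (n + 1), (((n + 1)! / i : ℕ) : ℤ) - 2 * (n + 1) * (n + 1)! := by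
        rw [sum_sub_distrib, ← mul_sum, ← mul_sum, sum_congr rfl hcancel, sum_const, Nat.card_Icc,
          Nat.add_sub_cancel, nsmul_eq_mul]
        push_cast
        ring

theorem deg_flex_locus_general (n : ℕ) (d : ℤ) (hn : 2 ≤ n) :
    degFlex n d (n + 1) =
      d ^ 2 * ∑ i ∈ Finset.Icc 1 n, ((n.factorial / i : ℕ) : ℤ) - d * (n + 1).factorial := by
  obtain ⟨p, rfl⟩ : ∃ p, n = p + 1 := ⟨n - 1, by omega⟩
  rw [degFlex, Nat.add_sub_cancel, Nat.add_sub_cancel, sum_Icc_succ_top p.le_succ, Icc_self,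
    sum_singleton, flexPoly_succ, coeff_C_mul, coeff_C_mul, coeff_flexFactor_self,
    coeff_flexFactor_succ_self]
  simp only [Nat.choose_self, Nat.choose_succ_self, Nat.choose_succ_self_right, Nat.factorial_succ]
  push_cast
  ring

/-- For `n ≥ 2` and `d ≥ n`, the flex degree formula
`N_{n+1}(n,d) = ∑_{m=n-1}^{n} λ_m(d,n+1)(binom(m,n-1) − binom(m,n))`
equals `d²·∑_{i=1}^n n!/i − d·(n+1)!`. -/
theorem deg_flex_locus (n : ℕ) (d : ℤ) (hn : 2 ≤ n) (hd : (n : ℤ) ≤ d) :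
    degFlex n d (n + 1) =
      d ^ 2 * ∑ i ∈ Finset.Icc 1 n, ((n.factorial / i : ℕ) : ℤ) - d * (n + 1).factorial :=
  deg_flex_locus_general n d hn
end

section
/- For n = 3 and k = 4, the degree formula N_4(3,d) = ∑_{m=2}^{3} λ_m(d,4)·(binom(m,2) − binom(m,3)) equals 11d² − 24d, recovering Salmon's formula for the degree of the flex locus of a general surface in P³. -/
open Polynomial Finset

/-- For `n = 3`, `k = 4`: `N_4(3,d) = 11d² − 24d` (Salmon's formula). -/
theorem deg_flex_n3 (d : ℤ) : degFlex 3 d 4 = 11 * d ^ 2 - 24 * d := by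
  have h : flexPoly d 4 = C (6*d) * X^3 + C (d*(11*d-36)) * X^2
      + C (d*(6*d^2-44*d+72)) * X + C (d*(d-2)*(d-4)*(d-6)) := by
    rw [flexPoly, show Finset.Icc 1 (4-1) = {1,2,3} by decide,
      Finset.prod_insert (show (1:ℕ) ∉ ({2,3}:Finset ℕ) by decide),
      Finset.prod_insert (show (2:ℕ) ∉ ({3}:Finset ℕ) by decide),
      Finset.prod_singleton]
    push_cast
    simp only [map_sub, map_mul, map_ofNat, map_one, one_mul, map_add, map_pow]
    ring
  rw [degFlex, show Finset.Icc (3-1) (4-1) = {2,3} by decide,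
    Finset.sum_insert (by decide), Finset.sum_singleton, h]
  simp only [coeff_add, coeff_C_mul, coeff_X_pow, coeff_X, coeff_C]
  norm_num [Nat.choose]
  ring
end

section
/- Let f(x_1,…,x_n) = ∑_{j=1}^{n-1} x_n^{2j-2}·x_j + x_n^{2n-1} over a field of characteristic zero, and define f_i(x,y) by f(x + t·y) = ∑_{i=0}^{2n-1} f_i(x,y)·t^i/i! where y = (y_1,…,y_{n-1}, 1). Then modulo the square of the maximal ideal (x,y)² at the origin, f(x+ty) ≡ ∑_{j=1}^{n-1}(t^{2j-2}x_j + t^{2j-1}y_j) + (2n-1)·t^{2n-2}·x_n + t^{2n-1}, and consequently the Jacobian matrix of (f_0,…,f_{2n-2}) with respect to (x_1,…,x_n,y_1,…,y_{n-1}) at the origin has rank 2n-1. -/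
open MvPolynomial

/-- With paper notation `N = n+1` (so `N ≥ 2`), the polynomial
`f(x_1,…,x_N) = ∑_{j=1}^{N-1} x_N^{2j-2}·x_j + x_N^{2N-1}`:
variables `x_1,…,x_N` are indexed by `Fin (n+1)`, with `x_N = X (Fin.last n)`. -/
noncomputable def flexExampleF (n : ℕ) : MvPolynomial (Fin (n + 1)) ℚ :=
  (∑ j : Fin n, MvPolynomial.X (Fin.last n) ^ (2 * (j : ℕ)) * MvPolynomial.X j.castSucc) +
    MvPolynomial.X (Fin.last n) ^ (2 * (n + 1) - 1)

/-- `f(x + t·y)` with `y = (y_1,…,y_{N-1},1)`, as a polynomial in `t` with coefficients in the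
polynomial ring in the variables `x` (`Sum.inl`) and `y` (`Sum.inr`); the Taylor coefficients
are `f_i = i!·coeff_i`. -/
noncomputable def flexExampleTaylor (n : ℕ) :
    Polynomial (MvPolynomial (Fin (n + 1) ⊕ Fin n) ℚ) :=
  MvPolynomial.aeval
    (Fin.lastCases
      (Polynomial.C (MvPolynomial.X (Sum.inl (Fin.last n))) + Polynomial.X)
      (fun j => Polynomial.C (MvPolynomial.X (Sum.inl j.castSucc)) +
        Polynomial.X * Polynomial.C (MvPolynomial.X (Sum.inr j))))
    (flexExampleF n)

/-- The linear approximation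
`∑_{j=1}^{N-1}(t^{2j-2}x_j + t^{2j-1}y_j) + (2N-1)·t^{2N-2}·x_N + t^{2N-1}` (paper `N = n+1`). -/
noncomputable def flexExampleLinear (n : ℕ) :
    Polynomial (MvPolynomial (Fin (n + 1) ⊕ Fin n) ℚ) :=
  (∑ j : Fin n,
      (Polynomial.X ^ (2 * (j : ℕ)) * Polynomial.C (MvPolynomial.X (Sum.inl j.castSucc)) +
        Polynomial.X ^ (2 * (j : ℕ) + 1) * Polynomial.C (MvPolynomial.X (Sum.inr j)))) +
    ((2 * (n + 1) - 1 : ℕ) : Polynomial (MvPolynomial (Fin (n + 1) ⊕ Fin n) ℚ)) * Polynomial.X ^ (2 * (n + 1) - 2) *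
      Polynomial.C (MvPolynomial.X (Sum.inl (Fin.last n))) +
    Polynomial.X ^ (2 * (n + 1) - 1)

lemma flex_pow_aux {R : Type*} [CommRing R] (a : R) (ha : a * a = 0) (k : ℕ) :
    (Polynomial.C a + Polynomial.X) ^ k =
      Polynomial.X ^ k + (k : Polynomial R) * Polynomial.X ^ (k - 1) * Polynomial.C a := by
  have hC : Polynomial.C a * Polynomial.C a = 0 := by
    rw [← Polynomial.C_mul, ha, Polynomial.C_0]
  induction k with
  | zero => simp
  | succ k ih =>
    rcases Nat.eq_zero_or_pos k with rfl | hk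
    · simp only [zero_add, pow_one, Nat.cast_one, one_mul, Nat.sub_self, pow_zero]
      ring
    · obtain ⟨m, rfl⟩ := Nat.exists_eq_succ_of_ne_zero hk.ne'
      rw [pow_succ]
      simp only [Nat.succ_eq_add_one, Nat.add_sub_cancel] at ih ⊢
      rw [ih]
      push_cast
      linear_combination ((m + 1 : Polynomial R)) * Polynomial.X ^ m * hC

lemma flex_term_aux {R : Type*} [CommRing R] (a b c : R) (haa : a * a = 0)
    (hab : a * b = 0) (hac : a * c = 0) (k : ℕ) :
    (Polynomial.C a + Polynomial.X) ^ k *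
        (Polynomial.C b + Polynomial.X * Polynomial.C c) =
      Polynomial.X ^ k * Polynomial.C b + Polynomial.X ^ (k + 1) * Polynomial.C c := by
  have h1 : Polynomial.C a * Polynomial.C b = 0 := by
    rw [← Polynomial.C_mul, hab, Polynomial.C_0]
  have h2 : Polynomial.C a * Polynomial.C c = 0 := by
    rw [← Polynomial.C_mul, hac, Polynomial.C_0]
  rw [flex_pow_aux a haa k]
  linear_combination ((k : Polynomial R) * Polynomial.X ^ (k - 1)) * h1 +
    ((k : Polynomial R) * Polynomial.X ^ (k - 1) * Polynomial.X) * h2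

lemma flex_map_eq (n : ℕ) :
    Polynomial.map (Ideal.Quotient.mk ((Ideal.span (Set.range (MvPolynomial.X :
        (Fin (n + 1) ⊕ Fin n) → MvPolynomial (Fin (n + 1) ⊕ Fin n) ℚ))) ^ 2))
      (flexExampleTaylor n) =
    Polynomial.map (Ideal.Quotient.mk ((Ideal.span (Set.range (MvPolynomial.X :
        (Fin (n + 1) ⊕ Fin n) → MvPolynomial (Fin (n + 1) ⊕ Fin n) ℚ))) ^ 2))
      (flexExampleLinear n) := by
  set I := (Ideal.span (Set.range (MvPolynomial.X :
      (Fin (n + 1) ⊕ Fin n) → MvPolynomial (Fin (n + 1) ⊕ Fin n) ℚ))) ^ 2 with hI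
  have hz : ∀ v w : Fin (n + 1) ⊕ Fin n,
      Ideal.Quotient.mk I (X v) * Ideal.Quotient.mk I (X w) = 0 := by
    intro v w
    rw [← map_mul, Ideal.Quotient.eq_zero_iff_mem, hI, sq]
    exact Ideal.mul_mem_mul (Ideal.subset_span ⟨v, rfl⟩) (Ideal.subset_span ⟨w, rfl⟩)
  simp only [flexExampleTaylor, flexExampleF, flexExampleLinear, map_add, map_sum, map_mul,
    map_pow, aeval_X, Fin.lastCases_last, Fin.lastCases_castSucc, Polynomial.map_add,
    Polynomial.map_sum, Polynomial.map_mul, Polynomial.map_pow, Polynomial.map_C,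
    Polynomial.map_X, Polynomial.map_natCast]
  have h1 : (∑ x : Fin n,
      (Polynomial.C ((Ideal.Quotient.mk I) (X (Sum.inl (Fin.last n)))) + Polynomial.X) ^ (2 * (x : ℕ)) *
        (Polynomial.C ((Ideal.Quotient.mk I) (X (Sum.inl x.castSucc))) +
          Polynomial.X * Polynomial.C ((Ideal.Quotient.mk I) (X (Sum.inr x))))) =
      ∑ x : Fin n,
      (Polynomial.X ^ (2 * (x : ℕ)) * Polynomial.C ((Ideal.Quotient.mk I) (X (Sum.inl x.castSucc))) +
        Polynomial.X ^ (2 * (x : ℕ) + 1) * Polynomial.C ((Ideal.Quotient.mk I) (X (Sum.inr x)))) :=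
    Finset.sum_congr rfl (fun j _ =>
      flex_term_aux _ _ _ (hz _ _) (hz _ _) (hz _ _) (2 * (j : ℕ)))
  rw [h1, flex_pow_aux _ (hz _ _) (2 * (n + 1) - 1)]
  have e1 : 2 * (n + 1) - 1 = 2 * n + 1 := by omega
  have e2 : 2 * n + 1 - 1 = 2 * n := by omega
  have e3 : 2 * (n + 1) - 2 = 2 * n := by omega
  rw [e1, e2, e3]
  ring

lemma flex_cc_span {σ : Type*} (p : MvPolynomial σ ℚ)
    (hp : p ∈ Ideal.span (Set.range (X : σ → MvPolynomial σ ℚ))) :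
    constantCoeff p = 0 := by
  have hle : Ideal.span (Set.range (X : σ → MvPolynomial σ ℚ)) ≤
      RingHom.ker (constantCoeff : MvPolynomial σ ℚ →+* ℚ) := by
    rw [Ideal.span_le]
    rintro _ ⟨w, rfl⟩
    simp [RingHom.mem_ker]
  exact RingHom.mem_ker.mp (hle hp)

lemma flex_cc_pderiv_zero {σ : Type*} (v : σ) (p : MvPolynomial σ ℚ)
    (hp : p ∈ (Ideal.span (Set.range (X : σ → MvPolynomial σ ℚ))) ^ 2) :
    constantCoeff (pderiv v p) = 0 := by
  rw [sq] at hp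
  refine Submodule.mul_induction_on hp (fun a ha b hb => ?_) (fun x y hx hy => ?_)
  · rw [pderiv_mul, map_add, map_mul, map_mul, flex_cc_span a ha, flex_cc_span b hb]
    ring
  · rw [map_add (pderiv v), map_add, hx, hy, add_zero]

lemma flex_rank_submatrix {R : Type*} [CommRing R] {k l o : Type*} [Fintype l] [Fintype o]
    (A : Matrix k l R) (e : o ≃ l) :
    (A.submatrix id ⇑e).rank = A.rank := by
  rw [Matrix.rank, Matrix.rank, Matrix.mulVecLin_submatrix,
    show LinearMap.funLeft R R (id : k → k) = LinearMap.id from rfl, LinearMap.id_comp,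
    LinearMap.range_comp, LinearMap.range_eq_top.mpr
      (LinearMap.funLeft_surjective_of_injective R R _ e.symm.injective),
    Submodule.map_top]

def flexEquiv (n : ℕ) : Fin (2 * n + 1) ≃ (Fin (n + 1) ⊕ Fin n) where
  toFun i := if h : (i : ℕ) % 2 = 0 then Sum.inl ⟨(i : ℕ) / 2, by have := i.isLt; omega⟩
    else Sum.inr ⟨(i : ℕ) / 2, by have := i.isLt; omega⟩
  invFun v := Sum.elim (fun w : Fin (n + 1) => ⟨2 * (w : ℕ), by have := w.isLt; omega⟩)
    (fun w : Fin n => ⟨2 * (w : ℕ) + 1, by have := w.isLt; omega⟩) v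
  left_inv i := by
    by_cases h : (i : ℕ) % 2 = 0
    · show Sum.elim _ _ (if h : (i : ℕ) % 2 = 0 then _ else _) = i
      rw [dif_pos h]
      simp only [Sum.elim_inl]
      ext
      simp only []
      omega
    · show Sum.elim _ _ (if h : (i : ℕ) % 2 = 0 then _ else _) = i
      rw [dif_neg h]
      simp only [Sum.elim_inr]
      ext
      simp only []
      omega
  right_inv v := by
    rcases v with w | w
    · simp only [Sum.elim_inl]
      show (if h : (2 * (w:ℕ)) % 2 = 0 then Sum.inl (⟨2 * (w:ℕ) / 2, _⟩ : Fin (n+1)) else _) = _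
      rw [dif_pos (by omega)]
      congr 1
      ext
      show 2 * (w:ℕ) / 2 = w
      omega
    · simp only [Sum.elim_inr]
      show (if h : (2 * (w:ℕ) + 1) % 2 = 0 then _ else Sum.inr (⟨(2 * (w:ℕ) + 1) / 2, _⟩ : Fin n)) = _
      rw [dif_neg (by omega)]
      congr 1
      ext
      show (2 * (w:ℕ) + 1) / 2 = w
      omega

set_option linter.unreachableTactic false in
set_option linter.unusedTactic false in
set_option linter.unnecessarySeqFocus false in
lemma flex_coeffL (n i : ℕ) (hi : i < 2 * n + 1) (v : Fin (n + 1) ⊕ Fin n) :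
    constantCoeff (pderiv v ((flexExampleLinear n).coeff i)) =
      Sum.elim
        (fun w : Fin (n + 1) =>
          if i = 2 * (w : ℕ) then (if i = 2 * n then ((2 * n + 1 : ℕ) : ℚ) else 1) else 0)
        (fun w : Fin n => if i = 2 * (w : ℕ) + 1 then (1 : ℚ) else 0) v := by
  classical
  have hc : (flexExampleLinear n).coeff i =
      (∑ j : Fin n,
        ((if i = 2 * (j : ℕ) then X (Sum.inl j.castSucc) else 0) +
         (if i = 2 * (j : ℕ) + 1 then X (Sum.inr j) else 0))) +
      (if i = 2 * (n + 1) - 2 then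
        ((2 * (n + 1) - 1 : ℕ) : MvPolynomial (Fin (n + 1) ⊕ Fin n) ℚ) * X (Sum.inl (Fin.last n))
       else 0) := by
    rw [flexExampleLinear, (map_natCast (Polynomial.C :
      MvPolynomial (Fin (n + 1) ⊕ Fin n) ℚ →+* _) (2 * (n + 1) - 1)).symm]
    simp only [Polynomial.coeff_add, Polynomial.finset_sum_coeff, Polynomial.coeff_mul_C,
      Polynomial.coeff_X_pow, Polynomial.coeff_C_mul, ite_mul, zero_mul, one_mul,
      mul_ite, mul_zero, mul_one]
    rw [if_neg (by omega : ¬ i = 2 * (n + 1) - 1), add_zero]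
  rw [hc, (map_natCast (C : ℚ →+* MvPolynomial (Fin (n + 1) ⊕ Fin n) ℚ)
    (2 * (n + 1) - 1)).symm]
  simp only [show 2 * (n + 1) - 2 = 2 * n from by omega,
    show 2 * (n + 1) - 1 = 2 * n + 1 from by omega]
  simp only [map_add, map_sum, apply_ite (pderiv v), map_zero, pderiv_mul, pderiv_C,
    zero_mul, pderiv_X, Pi.single_apply, apply_ite (constantCoeff), map_mul, map_one,
    constantCoeff_C, mul_zero, add_zero, zero_add, mul_ite, mul_one,
    Sum.inl.injEq, Sum.inr.injEq, reduceCtorEq, if_false, ite_self, Fin.ext_iff,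
    Fin.coe_castSucc, Fin.val_last]
  rcases v with w | w
  · simp only [Sum.elim_inl, Sum.inl.injEq, Sum.inr.injEq, reduceCtorEq, if_false, ite_self,
      Fin.ext_iff, Fin.coe_castSucc, Fin.val_last, Fin.val_mk, add_zero]
    by_cases hiw : i = 2 * (w : ℕ)
    · by_cases hwn : (w : ℕ) = n
      · rw [Finset.sum_eq_zero (fun j _ => by
          have := j.isLt
          split_ifs <;> first | rfl | (exfalso; omega))]
        try simp only [zero_add, add_zero]
        split_ifs <;> first | rfl | (exfalso; omega) | norm_num
      · have hwlt : (w : ℕ) < n := by have := w.isLt; omega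
        rw [Finset.sum_eq_single (⟨(w : ℕ), hwlt⟩ : Fin n) (fun j _ hj => by
            have hj' : (j : ℕ) ≠ (w : ℕ) := fun hh => hj (by ext; simpa using hh)
            split_ifs <;> first | rfl | (exfalso; omega))
          (fun h => absurd (Finset.mem_univ _) h)]
        simp only [Fin.val_mk]
        split_ifs <;> first | rfl | (exfalso; omega) | norm_num
    · rw [Finset.sum_eq_zero (fun j _ => by
          have := j.isLt
          split_ifs <;> first | rfl | (exfalso; omega))]
      try simp only [zero_add, add_zero]
      split_ifs <;> first | rfl | (exfalso; omega) | norm_num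
  · simp only [Sum.elim_inr, Sum.inl.injEq, Sum.inr.injEq, reduceCtorEq, if_false, ite_self,
      Fin.ext_iff, Fin.coe_castSucc, Fin.val_last, Fin.val_mk, zero_add, add_zero]
    by_cases hiw : i = 2 * (w : ℕ) + 1
    · rw [Finset.sum_eq_single w (fun j _ hj => by
          have hj' : (j : ℕ) ≠ (w : ℕ) := fun hh => hj (by ext; simpa using hh)
          split_ifs <;> first | rfl | (exfalso; omega))
        (fun h => absurd (Finset.mem_univ _) h)]
      split_ifs <;> first | rfl | (exfalso; omega) | norm_num
    · rw [Finset.sum_eq_zero (fun j _ => by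
          split_ifs <;> first | rfl | (exfalso; omega))]
      try simp only [zero_add, add_zero]
      split_ifs <;> first | rfl | (exfalso; omega) | norm_num

/-- Modulo the square of the maximal ideal `(x,y)` at the origin,
`f(x+ty) ≡ ∑_{j=1}^{N-1}(t^{2j-2}x_j + t^{2j-1}y_j) + (2N-1)t^{2N-2}x_N + t^{2N-1}`
(coefficientwise in `t`), and consequently the Jacobian matrix of `(f_0,…,f_{2N-2})` with
respect to `(x_1,…,x_N,y_1,…,y_{N-1})` at the origin has (maximal) rank `2N-1`
(here paper `N = n+1`, `N ≥ 2`, so the rank is `2n+1`). -/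
theorem flexExample_congruence_and_jacobian_rank (n : ℕ) (hn : 1 ≤ n) :
    (∀ i : ℕ,
      (flexExampleTaylor n).coeff i - (flexExampleLinear n).coeff i ∈
        (Ideal.span (Set.range (MvPolynomial.X :
          (Fin (n + 1) ⊕ Fin n) → MvPolynomial (Fin (n + 1) ⊕ Fin n) ℚ))) ^ 2) ∧
    (Matrix.of (fun (i : Fin (2 * n + 1)) (v : Fin (n + 1) ⊕ Fin n) =>
        MvPolynomial.constantCoeff
          (MvPolynomial.pderiv v
            (((i : ℕ).factorial : MvPolynomial (Fin (n + 1) ⊕ Fin n) ℚ) *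
              (flexExampleTaylor n).coeff i)))).rank = 2 * n + 1 := by
  classical
  have part1 : ∀ i : ℕ,
      (flexExampleTaylor n).coeff i - (flexExampleLinear n).coeff i ∈
        (Ideal.span (Set.range (MvPolynomial.X :
          (Fin (n + 1) ⊕ Fin n) → MvPolynomial (Fin (n + 1) ⊕ Fin n) ℚ))) ^ 2 := by
    intro i
    have h := congrArg (fun p => Polynomial.coeff p i) (flex_map_eq n)
    simp only [Polynomial.coeff_map] at h
    exact Ideal.Quotient.eq.mp h
  refine ⟨part1, ?_⟩
  set d : Fin (2 * n + 1) → ℚ := fun i =>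
    ((i : ℕ).factorial : ℚ) * (if (i : ℕ) = 2 * n then ((2 * n + 1 : ℕ) : ℚ) else 1) with hd
  have hM : (Matrix.of (fun (i : Fin (2 * n + 1)) (v : Fin (n + 1) ⊕ Fin n) =>
        MvPolynomial.constantCoeff
          (MvPolynomial.pderiv v
            (((i : ℕ).factorial : MvPolynomial (Fin (n + 1) ⊕ Fin n) ℚ) *
              (flexExampleTaylor n).coeff i)))) =
      (Matrix.diagonal d).submatrix id ⇑((flexEquiv n).symm) := by
    ext i v
    have hfac : (((i : ℕ).factorial : ℕ) : MvPolynomial (Fin (n + 1) ⊕ Fin n) ℚ) =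
        C (((i : ℕ).factorial : ℕ) : ℚ) :=
      (map_natCast (C : ℚ →+* MvPolynomial (Fin (n + 1) ⊕ Fin n) ℚ) _).symm
    have step1 : MvPolynomial.constantCoeff
        (MvPolynomial.pderiv v
          (((i : ℕ).factorial : MvPolynomial (Fin (n + 1) ⊕ Fin n) ℚ) *
            (flexExampleTaylor n).coeff i)) =
        ((i : ℕ).factorial : ℚ) *
          constantCoeff (pderiv v ((flexExampleTaylor n).coeff i)) := by
      rw [hfac, pderiv_mul, pderiv_C, zero_mul, zero_add, map_mul, constantCoeff_C]
    have step2 : constantCoeff (pderiv v ((flexExampleTaylor n).coeff i)) =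
        constantCoeff (pderiv v ((flexExampleLinear n).coeff i)) := by
      have h0 := flex_cc_pderiv_zero v _ (part1 (i : ℕ))
      rw [Derivation.map_sub, map_sub, sub_eq_zero] at h0
      exact h0
    rw [Matrix.of_apply, step1, step2, flex_coeffL n (i : ℕ) i.isLt v]
    rcases v with w | w
    · have hsymm : (flexEquiv n).symm (Sum.inl w) =
          (⟨2 * (w : ℕ), by have := w.isLt; omega⟩ : Fin (2 * n + 1)) := rfl
      simp only [Matrix.submatrix_apply, id_eq, hsymm, Matrix.diagonal_apply, Sum.elim_inl,
        Fin.ext_iff, Fin.val_mk, hd]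
      split_ifs <;> first | rfl | (exfalso; omega) | ring
    · have hsymm : (flexEquiv n).symm (Sum.inr w) =
          (⟨2 * (w : ℕ) + 1, by have := w.isLt; omega⟩ : Fin (2 * n + 1)) := rfl
      simp only [Matrix.submatrix_apply, id_eq, hsymm, Matrix.diagonal_apply, Sum.elim_inr,
        Fin.ext_iff, Fin.val_mk, hd]
      split_ifs <;> first | rfl | (exfalso; omega) | ring
  rw [hM, flex_rank_submatrix (Matrix.diagonal d) ((flexEquiv n).symm),
    Matrix.rank_diagonal]
  have hdne : ∀ i, d i ≠ 0 := by
    intro i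
    rw [hd]
    apply mul_ne_zero
    · exact_mod_cast (Nat.factorial_ne_zero _)
    · split_ifs
      · exact_mod_cast (by omega : (2 * n + 1 : ℕ) ≠ 0)
      · exact one_ne_zero
  rw [Fintype.card_congr (Equiv.subtypeUnivEquiv hdne), Fintype.card_fin]
end
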